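/- arXiv:2503.18518 — 5 statements merged into one kernel-verified Lean document; each statement's English description precedes it below -/
import Mathlib

section
/- For every pre-permuton μ and every integer k ≥ 2: H_{k−1}(μ) − log k ≤ H_k(μ) ≤ H_{k−1}(μ) + log k. -/
open MeasureTheory Filter

/-- The probability that `n` i.i.d. points sampled from `μ` realize the pattern `π`. -/
noncomputable def patternProb {n : ℕ} (μ : Measure (ℝ × ℝ)) (π : Equiv.Perm (Fin n)) : ℝ :=
  (n.factorial : ℝ) *
    ((Measure.pi fun _ : Fin n => μ)
      {p : Fin n → ℝ × ℝ | ∀ i j : Fin n, i < j →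
        (p i).1 < (p j).1 ∧ ((p i).2 < (p j).2 ↔ π i < π j)}).toReal

/-- Sampling entropy `H_n(μ)`. -/
noncomputable def samplingEntropy (μ : Measure (ℝ × ℝ)) (n : ℕ) : ℝ :=
  ∑ π : Equiv.Perm (Fin n), Real.negMulLog (patternProb μ π)

/-- A pre-permuton: a Borel probability measure on `ℝ²` with atomless marginals. -/
def IsPrePermuton (μ : Measure (ℝ × ℝ)) : Prop :=
  IsProbabilityMeasure μ ∧ (∀ x : ℝ, μ.map Prod.fst {x} = 0) ∧ ∀ y : ℝ, μ.map Prod.snd {y} = 0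

/-- A permuton: a Borel probability measure on `[0,1]²` with uniform marginals. -/
def IsPermuton (μ : Measure (ℝ × ℝ)) : Prop :=
  μ (Set.Icc (0:ℝ) 1 ×ˢ Set.Icc (0:ℝ) 1)ᶜ = 0 ∧
  μ.map Prod.fst = volume.restrict (Set.Icc (0:ℝ) 1) ∧
  μ.map Prod.snd = volume.restrict (Set.Icc (0:ℝ) 1)

/-!
Write `t(π)` for the pattern probabilities and `η = negMulLog`. Inserting into `π ∈ Sym(n)` a new
point at x-position `a` and y-rank `b` gives `insertPerm a b π ∈ Sym(n+1)`; for fixed `a` this is a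
bijection `Fin (n+1) × Sym(n) → Sym(n+1)`, so `(n+1) H_{n+1} = ∑_π ∑_{a,b} η(t(insertPerm a b π))`.
Forgetting the first of `n+1` sampled points gives `∑_{a,b} t(insertPerm a b π) = (n+1) t(π)`:
almost surely all coordinates are distinct, and then the forgotten point fits into the increasing
sequence of x-values, and into that of y-values, in exactly one position each. Each inner sum has
`(n+1)²` terms of total `(n+1) t(π)`, so by subadditivity of `η` and by Jensen it lies between
`η((n+1) t(π))` and `η((n+1) t(π)) + (n+1) t(π) log (n+1)²`. Summing over `π`, using
`∑_π t(π) = 1` (which follows from the same identity by induction), gives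
`|H_{n+1} - H_n| ≤ log (n+1)`.
-/

theorem existsUnique_prod_and {α β : Type*} {p : α → Prop} {q : β → Prop} :
    (∃! x : α × β, p x.1 ∧ q x.2) ↔ (∃! a, p a) ∧ ∃! b, q b := by
  constructor
  · rintro ⟨⟨a, b⟩, ⟨ha, hb⟩, huniq⟩
    exact ⟨⟨a, ha, fun a' ha' => congr_arg Prod.fst (huniq (a', b) ⟨ha', hb⟩)⟩,
      ⟨b, hb, fun b' hb' => congr_arg Prod.snd (huniq (a, b') ⟨ha, hb'⟩)⟩⟩
  · rintro ⟨⟨a, ha, hua⟩, ⟨b, hb, hub⟩⟩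
    exact ⟨(a, b), ⟨ha, hb⟩, fun x hx => Prod.ext (hua _ hx.1) (hub _ hx.2)⟩

namespace Fin

variable {n : ℕ} {α β : Type*}

theorem comp_insertNth (f : α → β) (a : Fin (n + 1)) (c : α) (g : Fin n → α) :
    f ∘ insertNth a c g = insertNth a (f c) (f ∘ g) := by
  funext i
  cases i using succAboveCases a <;> simp

theorem insertNth_injective {a : Fin (n + 1)} {c : α} {g : Fin n → α}
    (hg : Function.Injective g) (hc : ∀ i, g i ≠ c) : Function.Injective (insertNth a c g) := by
  intro i j h
  cases i using succAboveCases a <;> cases j using succAboveCases a <;>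
    simp_all [hg.eq_iff, (hc _).symm]

theorem eq_of_forall_castSucc_lt_iff {a a' : Fin (n + 1)}
    (h : ∀ i : Fin n, i.castSucc < a ↔ i.castSucc < a') : a = a' := by
  have key {a a' : Fin (n + 1)} (h : ∀ i : Fin n, i.castSucc < a' → i.castSucc < a) :
      a' ≤ a := by
    by_contra! haa'
    have ha : a ≠ last n := (haa'.trans_le (le_last a')).ne
    simpa using h (a.castPred ha) (by simpa using haa')
  exact le_antisymm (key fun i => (h i).1) (key fun i => (h i).2)

variable [LinearOrder α]

theorem exists_forall_lt_iff_castSucc_lt {g : Fin n → α} (hg : Monotone g) (c : α) :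
    ∃ a : Fin (n + 1), ∀ i, g i < c ↔ i.castSucc < a := by
  classical
  by_cases h : ∃ i, c ≤ g i
  · let i₀ := (Finset.univ.filter fun i => c ≤ g i).min'
      (by simpa [Finset.filter_nonempty_iff] using h)
    have hi₀ : c ≤ g i₀ := by simpa using Finset.min'_mem (Finset.univ.filter fun i => c ≤ g i) _
    refine ⟨i₀.castSucc, fun i => ⟨fun hi => castSucc_lt_castSucc_iff.2 ?_, fun hi => ?_⟩⟩
    · by_contra! hle
      exact (hi.trans_le (hi₀.trans (hg hle))).false
    · by_contra! hle
      exact (castSucc_lt_castSucc_iff.1 hi).not_ge (Finset.min'_le _ _ (by simpa using hle))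
  · push Not at h
    exact ⟨last n, fun i => by simp [h i, castSucc_lt_last]⟩

theorem strictMono_iff_existsUnique_strictMono_insertNth {g : Fin n → α} {c : α}
    (hc : ∀ i, g i ≠ c) : StrictMono g ↔ ∃! a, StrictMono (insertNth a c g) := by
  have lt_iff {a : Fin (n + 1)} (h : StrictMono (insertNth a c g)) (i : Fin n) :
      g i < c ↔ i.castSucc < a := by
    obtain ⟨-, hlt, hgt⟩ := (strictMono_insertNth_iff a c g).1 h
    exact ⟨fun hi => not_le.1 fun hai => (hgt i hai).asymm hi, hlt i⟩
  refine ⟨fun hg => ?_, fun ⟨a, ha, _⟩ => ((strictMono_insertNth_iff a c g).1 ha).1⟩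
  obtain ⟨a, ha⟩ := exists_forall_lt_iff_castSucc_lt hg.monotone c
  refine ⟨a, (strictMono_insertNth_iff a c g).2 ⟨hg, fun i hi => (ha i).2 hi, fun i hai => ?_⟩,
    fun a' ha' => eq_of_forall_castSucc_lt_iff fun i => (lt_iff ha' i).symm.trans (ha i)⟩
  exact (hc i).lt_or_gt.resolve_left fun hi => ((ha i).1 hi).not_ge hai

end Fin

namespace Real

theorem negMulLog_sum_le_sum_negMulLog {ι : Type*} {s : Finset ι} {f : ι → ℝ}
    (hf : ∀ i ∈ s, 0 ≤ f i) : negMulLog (∑ i ∈ s, f i) ≤ ∑ i ∈ s, negMulLog (f i) := by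
  calc negMulLog (∑ i ∈ s, f i) = ∑ i ∈ s, -f i * log (∑ j ∈ s, f j) := by
        rw [negMulLog, ← Finset.sum_mul, Finset.sum_neg_distrib]
    _ ≤ ∑ i ∈ s, negMulLog (f i) := Finset.sum_le_sum fun i hi => by
        rcases (hf i hi).eq_or_lt with h0 | hpos
        · simp [← h0]
        · exact mul_le_mul_of_nonpos_left (log_le_log hpos (Finset.single_le_sum hf hi))
            (neg_nonpos.2 hpos.le)

theorem sum_negMulLog_le {ι : Type*} {s : Finset ι} {f : ι → ℝ} (hf : ∀ i ∈ s, 0 ≤ f i) :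
    ∑ i ∈ s, negMulLog (f i) ≤ negMulLog (∑ i ∈ s, f i) + (∑ i ∈ s, f i) * log s.card := by
  rcases s.eq_empty_or_nonempty with rfl | hs
  · simp
  have hc : (0 : ℝ) < s.card := by exact_mod_cast hs.card_pos
  have hjensen := concaveOn_negMulLog.le_map_sum (t := s) (w := fun _ => (s.card : ℝ)⁻¹) (p := f)
    (fun _ _ => by positivity) (by simp [hc.ne']) hf
  have hinv : negMulLog (s.card : ℝ)⁻¹ = (s.card : ℝ)⁻¹ * log s.card := by simp [negMulLog]
  simp only [smul_eq_mul, ← Finset.mul_sum, negMulLog_mul, hinv] at hjensen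
  refine le_of_mul_le_mul_left ?_ (inv_pos.2 hc)
  linarith

end Real

namespace MeasureTheory

theorem measure_eq_sum_of_ae_existsUnique {α ι : Type*} [MeasurableSpace α] [Fintype ι]
    {μ : Measure α} {s : Set α} {t : ι → Set α} (ht : ∀ i, NullMeasurableSet (t i) μ)
    (hts : ∀ i, t i ⊆ s) (h : ∀ᵐ x ∂μ, x ∈ s → ∃! i, x ∈ t i) : μ s = ∑ i, μ (t i) := by
  have hs : s =ᵐ[μ] ⋃ i, t i := by
    filter_upwards [h] with x hx
    exact propext ⟨fun hxs => Set.mem_iUnion.2 (hx hxs).exists,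
      fun hxt => let ⟨i, hi⟩ := Set.mem_iUnion.1 hxt; hts i hi⟩
  have hd : Pairwise (Function.onFun (AEDisjoint μ) t) := fun i j hij => by
    refine measure_eq_zero_iff_ae_notMem.2 ?_
    filter_upwards [h] with x hx ⟨hi, hj⟩
    exact hij ((hx (hts i hi)).unique hi hj)
  rw [measure_congr hs, measure_iUnion₀ hd ht, tsum_fintype]

open ProbabilityTheory in
theorem ae_injective_comp_pi {α β ι : Type*} [MeasurableSpace α] [MeasurableSpace β]
    [MeasurableEq β] [Fintype ι] {μ : Measure α} [IsProbabilityMeasure μ] {f : α → β}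
    (hf : Measurable f) (hμf : ∀ x, μ.map f {x} = 0) :
    ∀ᵐ p ∂Measure.pi fun _ : ι => μ, Function.Injective fun i => f (p i) := by
  have hne {i j : ι} (hij : i ≠ j) : ∀ᵐ p ∂Measure.pi fun _ : ι => μ, f (p i) ≠ f (p j) := by
    have hX (k : ι) : Measurable fun p : ι → α => f (p k) := hf.comp (measurable_pi_apply k)
    have hlaw (k : ι) : (Measure.pi fun _ : ι => μ).map (fun p => f (p k)) = μ.map f :=
      (Measure.map_map hf (measurable_pi_apply k)).symm.trans
        (congrArg _ (measurePreserving_eval _ k).map_eq)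
    have hind : IndepFun (fun p : ι → α => f (p i)) (fun p => f (p j)) (Measure.pi fun _ => μ) :=
      (iIndepFun_pi (X := fun _ => f) fun _ => hf.aemeasurable).indepFun hij
    refine ae_iff.2 ?_
    simp only [ne_eq, not_not]
    change (Measure.pi fun _ => μ) ((fun p => (f (p i), f (p j))) ⁻¹' Set.diagonal β) = 0
    rw [← Measure.map_apply ((hX i).prodMk (hX j)) measurableSet_diagonal,
      (indepFun_iff_map_prod_eq_prod_map_map (hX i).aemeasurable (hX j).aemeasurable).1 hind,
      hlaw, hlaw, Measure.prod_apply measurableSet_diagonal]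
    have hsection (x : β) : Prod.mk x ⁻¹' Set.diagonal β = {x} := by
      ext
      simp [eq_comm]
    simp [hsection, hμf]
  have hall (i j : ι) : ∀ᵐ p ∂Measure.pi fun _ : ι => μ, f (p i) = f (p j) → i = j := by
    by_cases hij : i = j
    · exact ae_of_all _ fun _ _ => hij
    · filter_upwards [hne hij] with p hp h using absurd h hp
  filter_upwards [ae_all_iff.2 fun i => ae_all_iff.2 (hall i)] with p hp i j using hp i j

end MeasureTheory

namespace Permuton

open Function Equiv
open Real (negMulLog log negMulLog_mul negMulLog_sum_le_sum_negMulLog sum_negMulLog_le)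

variable {n : ℕ}

/-- The pattern of `π` with a new point inserted at x-position `a` and y-rank `b`. -/
def insertPerm (a b : Fin (n + 1)) (π : Perm (Fin n)) : Perm (Fin (n + 1)) :=
  (finSuccEquiv' a).trans ((optionCongr π).trans (finSuccEquiv' b).symm)

@[simp] theorem insertPerm_apply_self (a b : Fin (n + 1)) (π : Perm (Fin n)) :
    insertPerm a b π a = b := by
  simp [insertPerm]

@[simp] theorem insertPerm_apply_succAbove (a b : Fin (n + 1)) (π : Perm (Fin n)) (i : Fin n) :
    insertPerm a b π (a.succAbove i) = b.succAbove (π i) := by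
  simp [insertPerm]

theorem insertPerm_symm (a b : Fin (n + 1)) (π : Perm (Fin n)) :
    (insertPerm a b π).symm = insertPerm b a π.symm := by
  refine Equiv.ext fun j => ?_
  rw [Equiv.symm_apply_eq]
  cases j using Fin.succAboveCases b <;> simp

theorem insertPerm_bijective (a : Fin (n + 1)) :
    Bijective fun bπ : Fin (n + 1) × Perm (Fin n) => insertPerm a bπ.1 bπ.2 := by
  refine (Fintype.bijective_iff_injective_and_card _).2 ⟨fun ⟨b, π⟩ ⟨b', π'⟩ h => ?_, ?_⟩
  · have hb : b = b' := by simpa using congr($h a)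
    subst hb
    have hπ : π = π' := Equiv.ext fun i => by simpa using congr($h (a.succAbove i))
    rw [hπ]
  · simp [Fintype.card_perm, Nat.factorial_succ]

theorem sum_sum_insertPerm {M : Type*} [AddCommMonoid M] (a : Fin (n + 1))
    (f : Perm (Fin (n + 1)) → M) : ∑ π : Perm (Fin n), ∑ b, f (insertPerm a b π) = ∑ σ, f σ := by
  rw [Finset.sum_comm, ← Fintype.sum_prod_type']
  exact Fintype.sum_bijective _ (insertPerm_bijective a) _ _ fun _ => rfl

theorem sum_sum_insertPerm_eq_mul (f : Perm (Fin (n + 1)) → ℝ) :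
    ∑ π : Perm (Fin n), ∑ ab : Fin (n + 1) × Fin (n + 1), f (insertPerm ab.1 ab.2 π)
      = (n + 1) * ∑ σ, f σ := by
  simp_rw [Fintype.sum_prod_type]
  rw [Finset.sum_comm]
  simp [sum_sum_insertPerm]

def patternCell (π : Perm (Fin n)) : Set (Fin n → ℝ × ℝ) :=
  {p | ∀ i j, i < j → (p i).1 < (p j).1 ∧ ((p i).2 < (p j).2 ↔ π i < π j)}

theorem measurableSet_patternCell (π : Perm (Fin n)) : MeasurableSet (patternCell π) :=
  measurableSet_setOfPred.2 (by fun_prop)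

theorem mem_patternCell_iff {π : Perm (Fin n)} {p : Fin n → ℝ × ℝ}
    (hp : Injective fun i => (p i).2) :
    p ∈ patternCell π ↔
      StrictMono (fun i => (p i).1) ∧ StrictMono fun j => (p (π.symm j)).2 := by
  refine ⟨fun h => ⟨fun i j hij => (h i j hij).1, fun j k hjk => ?_⟩,
    fun ⟨hx, hy⟩ i j hij => ⟨hx hij, ?_⟩⟩
  · rcases lt_or_gt_of_ne (π.symm.injective.ne hjk.ne) with hlt | hlt
    · simpa [hjk] using (h _ _ hlt).2
    · refine lt_of_le_of_ne (not_lt.1 fun hy => ?_) (hp.ne (π.symm.injective.ne hjk.ne))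
      simpa [hjk.not_gt] using (h _ _ hlt).2.1 hy
  · simpa using hy.lt_iff_lt (a := π i) (b := π j)

theorem mem_patternCell_of_insertNth_mem {π : Perm (Fin n)} {q : Fin n → ℝ × ℝ} {z : ℝ × ℝ}
    {a b : Fin (n + 1)} (h : Fin.insertNth a z q ∈ patternCell (insertPerm a b π)) :
    q ∈ patternCell π := fun i j hij => by
  simpa using h (a.succAbove i) (a.succAbove j) (Fin.strictMono_succAbove a hij)

theorem insertNth_mem_patternCell_iff {π : Perm (Fin n)} {q : Fin n → ℝ × ℝ} {z : ℝ × ℝ}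
    (hq : Injective fun i => (q i).2) (hzy : ∀ i, (q i).2 ≠ z.2) (a b : Fin (n + 1)) :
    Fin.insertNth a z q ∈ patternCell (insertPerm a b π) ↔
      StrictMono (Fin.insertNth a z.1 fun i => (q i).1) ∧
        StrictMono (Fin.insertNth b z.2 fun j => (q (π.symm j)).2) := by
  have hx : (fun i => (Fin.insertNth (α := fun _ => ℝ × ℝ) a z q i).1)
      = Fin.insertNth a z.1 fun i => (q i).1 :=
    Fin.comp_insertNth Prod.fst a z q
  have hy : (fun i => (Fin.insertNth (α := fun _ => ℝ × ℝ) a z q i).2)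
      = Fin.insertNth a z.2 fun i => (q i).2 :=
    Fin.comp_insertNth Prod.snd a z q
  have hyπ : (fun j => (Fin.insertNth (α := fun _ => ℝ × ℝ) a z q ((insertPerm a b π).symm j)).2)
      = Fin.insertNth b z.2 fun j => (q (π.symm j)).2 := by
    funext j
    cases j using Fin.succAboveCases b <;> simp [insertPerm_symm]
  rw [mem_patternCell_iff (by rw [hy]; exact Fin.insertNth_injective hq hzy), hx, hyπ]

theorem mem_patternCell_iff_existsUnique_insertNth {π : Perm (Fin n)} {q : Fin n → ℝ × ℝ}
    {z : ℝ × ℝ} (hq : Injective fun i => (q i).2) (hzx : ∀ i, (q i).1 ≠ z.1)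
    (hzy : ∀ i, (q i).2 ≠ z.2) :
    q ∈ patternCell π ↔ ∃! ab : Fin (n + 1) × Fin (n + 1),
      Fin.insertNth ab.1 z q ∈ patternCell (insertPerm ab.1 ab.2 π) := by
  rw [mem_patternCell_iff hq, Fin.strictMono_iff_existsUnique_strictMono_insertNth hzx,
    Fin.strictMono_iff_existsUnique_strictMono_insertNth fun j => hzy (π.symm j),
    ← existsUnique_prod_and]
  exact existsUnique_congr fun ab => (insertNth_mem_patternCell_iff hq hzy ab.1 ab.2).symm

variable {μ : Measure (ℝ × ℝ)}

theorem measure_patternCell_eq_sum (hμ : IsPrePermuton μ) (π : Perm (Fin n)) :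
    Measure.pi (fun _ => μ) (patternCell π)
      = ∑ ab : Fin (n + 1) × Fin (n + 1),
          Measure.pi (fun _ => μ) (patternCell (insertPerm ab.1 ab.2 π)) := by
  obtain ⟨hprob, hx, hy⟩ := hμ
  set ν := μ.prod (Measure.pi fun _ : Fin n => μ)
  have hins (a : Fin (n + 1)) : MeasurePreserving
      (fun zq : (ℝ × ℝ) × (Fin n → ℝ × ℝ) => Fin.insertNth a zq.1 zq.2) ν
      (Measure.pi fun _ => μ) :=
    (measurePreserving_piFinSuccAbove (fun _ => μ) a).symm
  have hgeneric : ∀ᵐ zq ∂ν, Injective (fun i => (zq.2 i).2) ∧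
      ∀ i, (zq.2 i).1 ≠ zq.1.1 ∧ (zq.2 i).2 ≠ zq.1.2 := by
    filter_upwards [(hins 0).quasiMeasurePreserving.ae (ae_injective_comp_pi measurable_fst hx),
      (hins 0).quasiMeasurePreserving.ae (ae_injective_comp_pi measurable_snd hy)]
      with ⟨z, q⟩ hzqx hzqy
    simp only [Fin.insertNth_zero'] at hzqx hzqy
    refine ⟨fun i j h => Fin.succ_injective _ (hzqy (by simpa using h)), fun i => ⟨?_, ?_⟩⟩
    · simpa using hzqx.ne (Fin.succ_ne_zero i)
    · simpa using hzqy.ne (Fin.succ_ne_zero i)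
  calc Measure.pi (fun _ => μ) (patternCell π) = ν (Set.univ ×ˢ patternCell π) := by
        rw [Measure.prod_prod, measure_univ, one_mul]
    _ = ∑ ab : Fin (n + 1) × Fin (n + 1), ν ((fun zq => Fin.insertNth ab.1 zq.1 zq.2) ⁻¹'
          patternCell (insertPerm ab.1 ab.2 π)) := by
        refine measure_eq_sum_of_ae_existsUnique (fun ab => ((measurableSet_patternCell _).preimage
          (hins ab.1).measurable).nullMeasurableSet)
          (fun ab zq h => ⟨trivial, mem_patternCell_of_insertNth_mem h⟩) ?_
        filter_upwards [hgeneric] with ⟨z, q⟩ ⟨hq, hzq⟩ h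
        exact (mem_patternCell_iff_existsUnique_insertNth hq (fun i => (hzq i).1)
          (fun i => (hzq i).2)).1 h.2
    _ = _ := Finset.sum_congr rfl fun ab _ =>
        (hins ab.1).measure_preimage (measurableSet_patternCell _).nullMeasurableSet

theorem patternProb_eq (μ : Measure (ℝ × ℝ)) (π : Perm (Fin n)) :
    patternProb μ π = n.factorial * (Measure.pi (fun _ => μ) (patternCell π)).toReal :=
  rfl

theorem patternProb_nonneg (μ : Measure (ℝ × ℝ)) (π : Perm (Fin n)) : 0 ≤ patternProb μ π := by
  rw [patternProb_eq]
  positivity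

theorem sum_patternProb_insertPerm (hμ : IsPrePermuton μ) (π : Perm (Fin n)) :
    ∑ ab : Fin (n + 1) × Fin (n + 1), patternProb μ (insertPerm ab.1 ab.2 π)
      = (n + 1) * patternProb μ π := by
  have := hμ.1
  simp_rw [patternProb_eq, measure_patternCell_eq_sum hμ π,
    ENNReal.toReal_sum fun _ _ => measure_ne_top _ _, Finset.mul_sum]
  refine Finset.sum_congr rfl fun _ _ => ?_
  push_cast [Nat.factorial_succ]
  ring

theorem sum_patternProb (hμ : IsPrePermuton μ) : ∀ n, ∑ π : Perm (Fin n), patternProb μ π = 1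
  | 0 => by
    have := hμ.1
    simp [patternProb_eq, patternCell]
  | n + 1 => by
    have h := sum_sum_insertPerm_eq_mul (n := n) (patternProb μ)
    simp_rw [sum_patternProb_insertPerm hμ, ← Finset.mul_sum, sum_patternProb hμ n] at h
    exact (mul_left_cancel₀ (by positivity) h).symm

theorem sum_negMulLog_mul_patternProb (hμ : IsPrePermuton μ) (n : ℕ) (c : ℝ) :
    ∑ π : Perm (Fin n), negMulLog (c * patternProb μ π) = c * (samplingEntropy μ n - log c) := by
  simp_rw [negMulLog_mul]
  rw [Finset.sum_add_distrib, ← Finset.sum_mul, ← Finset.mul_sum, sum_patternProb hμ,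
    samplingEntropy, negMulLog]
  ring

theorem samplingEntropy_succ_le (hμ : IsPrePermuton μ) (n : ℕ) :
    samplingEntropy μ (n + 1) ≤ samplingEntropy μ n + log (n + 1) := by
  refine le_of_mul_le_mul_left ?_ (by positivity : (0 : ℝ) < n + 1)
  calc (n + 1) * samplingEntropy μ (n + 1)
      = ∑ π : Perm (Fin n), ∑ ab : Fin (n + 1) × Fin (n + 1),
          negMulLog (patternProb μ (insertPerm ab.1 ab.2 π)) :=
        (sum_sum_insertPerm_eq_mul _).symm
    _ ≤ ∑ π : Perm (Fin n), (negMulLog ((n + 1) * patternProb μ π)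
          + (n + 1) * patternProb μ π * (2 * log (n + 1))) := by
        refine Finset.sum_le_sum fun π _ => ?_
        have h := sum_negMulLog_le (s := Finset.univ)
          (f := fun ab : Fin (n + 1) × Fin (n + 1) => patternProb μ (insertPerm ab.1 ab.2 π))
          fun _ _ => patternProb_nonneg μ _
        have hcard : log (Finset.univ : Finset (Fin (n + 1) × Fin (n + 1))).card
            = 2 * log (n + 1) := by
          rw [Finset.card_univ, Fintype.card_prod, Fintype.card_fin, Nat.cast_mul,
            Real.log_mul (by positivity) (by positivity)]
          push_cast
          ring
        rwa [sum_patternProb_insertPerm hμ, hcard] at h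
    _ = (n + 1) * (samplingEntropy μ n + log (n + 1)) := by
        rw [Finset.sum_add_distrib, sum_negMulLog_mul_patternProb hμ, ← Finset.sum_mul,
          ← Finset.mul_sum, sum_patternProb hμ]
        ring

theorem samplingEntropy_sub_log_le (hμ : IsPrePermuton μ) (n : ℕ) :
    samplingEntropy μ n - log (n + 1) ≤ samplingEntropy μ (n + 1) := by
  refine le_of_mul_le_mul_left ?_ (by positivity : (0 : ℝ) < n + 1)
  calc (n + 1) * (samplingEntropy μ n - log (n + 1))
      = ∑ π : Perm (Fin n), negMulLog ((n + 1) * patternProb μ π) :=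
        (sum_negMulLog_mul_patternProb hμ n _).symm
    _ ≤ ∑ π : Perm (Fin n), ∑ ab : Fin (n + 1) × Fin (n + 1),
          negMulLog (patternProb μ (insertPerm ab.1 ab.2 π)) :=
        Finset.sum_le_sum fun π _ => by
          rw [← sum_patternProb_insertPerm hμ π]
          exact negMulLog_sum_le_sum_negMulLog fun _ _ => patternProb_nonneg μ _
    _ = (n + 1) * samplingEntropy μ (n + 1) :=
        sum_sum_insertPerm_eq_mul fun σ => negMulLog (patternProb μ σ)

end Permuton

theorem samplingEntropy_quasiMonotone_general
    (μ : Measure (ℝ × ℝ)) (hμ : IsPrePermuton μ) (k : ℕ) :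
    samplingEntropy μ (k - 1) - Real.log k ≤ samplingEntropy μ k ∧
      samplingEntropy μ k ≤ samplingEntropy μ (k - 1) + Real.log k := by
  rcases k with _ | n
  · simp
  · push_cast
    exact ⟨Permuton.samplingEntropy_sub_log_le hμ n, Permuton.samplingEntropy_succ_le hμ n⟩

/-- Quasimonotonicity of the sampling entropy sequence:
H_{k-1}(μ) - log k ≤ H_k(μ) ≤ H_{k-1}(μ) + log k for every pre-permuton μ and k ≥ 2. -/
theorem samplingEntropy_quasiMonotone
    (μ : Measure (ℝ × ℝ)) (hμ : IsPrePermuton μ) (k : ℕ) (hk : 2 ≤ k) :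
    samplingEntropy μ (k - 1) - Real.log k ≤ samplingEntropy μ k ∧
      samplingEntropy μ k ≤ samplingEntropy μ (k - 1) + Real.log k :=
  samplingEntropy_quasiMonotone_general μ hμ k
end

section
/- Let f, f_1, f_2, … : [0,1] → [0,1] be Lebesgue-measure-preserving Borel maps with f_n → f uniformly (in the supremum norm). Then d_□(μ_{f_n}, μ_f) → 0 as n → ∞, i.e., μ_{f_n} converges to μ_f in the rectangle (cut) metric on permutons. -/
open MeasureTheory Filter

/-- The permuton associated with a Lebesgue-measure-preserving map f : [0,1] → [0,1]:
the pushforward of Lebesgue measure on [0,1] under x ↦ (x, f x). -/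
noncomputable def graphPermuton (f : ℝ → ℝ) : Measure (ℝ × ℝ) :=
  Measure.map (fun t => (t, f t)) (volume.restrict (Set.Icc (0:ℝ) 1))

/-- The rectangle (cut) metric on measures on [0,1]²:
d_□(ν₁, ν₂) = sup over axis-parallel rectangles R ⊆ [0,1]² of |ν₁(R) - ν₂(R)|. -/
noncomputable def rectDist (ν₁ ν₂ : Measure (ℝ × ℝ)) : ℝ :=
  sSup {r : ℝ | ∃ x₁ x₂ y₁ y₂ : ℝ, 0 ≤ x₁ ∧ x₂ ≤ 1 ∧ 0 ≤ y₁ ∧ y₂ ≤ 1 ∧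
    r = |(ν₁ (Set.Icc x₁ x₂ ×ˢ Set.Icc y₁ y₂)).toReal -
          (ν₂ (Set.Icc x₁ x₂ ×ˢ Set.Icc y₁ y₂)).toReal|}

lemma graphPermuton_rect (g : ℝ → ℝ) (hg : Measurable g) (x₁ x₂ y₁ y₂ : ℝ) :
    graphPermuton g (Set.Icc x₁ x₂ ×ˢ Set.Icc y₁ y₂)
      = volume ((Set.Icc x₁ x₂ ∩ g ⁻¹' Set.Icc y₁ y₂) ∩ Set.Icc (0:ℝ) 1) := by
  have hpre : (fun t => (t, g t)) ⁻¹' (Set.Icc x₁ x₂ ×ˢ Set.Icc y₁ y₂)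
      = Set.Icc x₁ x₂ ∩ g ⁻¹' Set.Icc y₁ y₂ := by
    ext t; simp [Set.mem_prod]; tauto
  rw [graphPermuton, Measure.map_apply (show Measurable fun t => (t, g t) from measurable_id.prodMk hg)
      (measurableSet_Icc.prod measurableSet_Icc), hpre,
    Measure.restrict_apply (measurableSet_Icc.inter (hg measurableSet_Icc))]

lemma zero_mem_rectSet (ν₁ ν₂ : Measure (ℝ × ℝ)) :
    (0:ℝ) ∈ {r : ℝ | ∃ x₁ x₂ y₁ y₂ : ℝ, 0 ≤ x₁ ∧ x₂ ≤ 1 ∧ 0 ≤ y₁ ∧ y₂ ≤ 1 ∧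
      r = |(ν₁ (Set.Icc x₁ x₂ ×ˢ Set.Icc y₁ y₂)).toReal -
            (ν₂ (Set.Icc x₁ x₂ ×ˢ Set.Icc y₁ y₂)).toReal|} := by
  refine ⟨1, 0, 1, 0, by norm_num, by norm_num, by norm_num, by norm_num, ?_⟩
  have h : Set.Icc (1:ℝ) 0 = ∅ := Set.Icc_eq_empty (by norm_num)
  simp [h]

lemma rect_mem_bound (f g : ℝ → ℝ) (hf : Measurable f) (hg : Measurable g)
    (hmp : Measure.map f (volume.restrict (Set.Icc (0:ℝ) 1)) =
      volume.restrict (Set.Icc (0:ℝ) 1))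
    (ε : ℝ) (hε : 0 < ε)
    (hclose : ∀ x ∈ Set.Icc (0:ℝ) 1, |g x - f x| ≤ ε) :
    ∀ r ∈ {r : ℝ | ∃ x₁ x₂ y₁ y₂ : ℝ, 0 ≤ x₁ ∧ x₂ ≤ 1 ∧ 0 ≤ y₁ ∧ y₂ ≤ 1 ∧
      r = |((graphPermuton g) (Set.Icc x₁ x₂ ×ˢ Set.Icc y₁ y₂)).toReal -
            ((graphPermuton f) (Set.Icc x₁ x₂ ×ˢ Set.Icc y₁ y₂)).toReal|},
      r ≤ 4 * ε := by
  rintro r ⟨x₁, x₂, y₁, y₂, hx₁, hx₂, hy₁, hy₂, rfl⟩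
  set I : Set ℝ := Set.Icc (0:ℝ) 1 with hI
  set S : Set ℝ := Set.Icc (y₁ - ε) (y₁ + ε) ∪ Set.Icc (y₂ - ε) (y₂ + ε) with hS
  have hSm : MeasurableSet S := measurableSet_Icc.union measurableSet_Icc
  set Ag : Set ℝ := (Set.Icc x₁ x₂ ∩ g ⁻¹' Set.Icc y₁ y₂) ∩ I with hAg
  set Af : Set ℝ := (Set.Icc x₁ x₂ ∩ f ⁻¹' Set.Icc y₁ y₂) ∩ I with hAf
  set B : Set ℝ := f ⁻¹' S ∩ I with hB
  -- B has measure ≤ 4ε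
  have hBvol : volume B ≤ ENNReal.ofReal (4 * ε) := by
    have h1 : volume B = (Measure.map f (volume.restrict I)) S := by
      rw [Measure.map_apply hf hSm, Measure.restrict_apply (hf hSm)]
    rw [h1, hmp, Measure.restrict_apply hSm]
    calc volume (S ∩ I) ≤ volume S := measure_mono Set.inter_subset_left
      _ ≤ volume (Set.Icc (y₁ - ε) (y₁ + ε)) + volume (Set.Icc (y₂ - ε) (y₂ + ε)) :=
          measure_union_le _ _
      _ = ENNReal.ofReal (4 * ε) := by
          rw [Real.volume_Icc, Real.volume_Icc, ← ENNReal.ofReal_add (by linarith) (by linarith)]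
          ring_nf
  have hsub1 : Ag ⊆ Af ∪ B := by
    rintro t ⟨⟨htx, hty⟩, htI⟩
    have hc := hclose t htI
    rw [abs_le] at hc
    rw [Set.mem_preimage, Set.mem_Icc] at hty
    by_cases hft : f t ∈ Set.Icc y₁ y₂
    · exact Or.inl ⟨⟨htx, hft⟩, htI⟩
    · refine Or.inr ⟨?_, htI⟩
      rw [Set.mem_Icc, not_and_or, not_le, not_le] at hft
      rcases hft with h | h
      · exact Or.inl (Set.mem_Icc.mpr ⟨by linarith, by linarith⟩)
      · exact Or.inr (Set.mem_Icc.mpr ⟨by linarith, by linarith⟩)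
  have hsub2 : Af ⊆ Ag ∪ B := by
    rintro t ⟨⟨htx, hty⟩, htI⟩
    have hc := hclose t htI
    rw [abs_le] at hc
    rw [Set.mem_preimage, Set.mem_Icc] at hty
    by_cases hgt : g t ∈ Set.Icc y₁ y₂
    · exact Or.inl ⟨⟨htx, hgt⟩, htI⟩
    · refine Or.inr ⟨?_, htI⟩
      rw [Set.mem_Icc, not_and_or, not_le, not_le] at hgt
      rcases hgt with h | h
      · exact Or.inl (Set.mem_Icc.mpr ⟨by linarith, by linarith⟩)
      · exact Or.inr (Set.mem_Icc.mpr ⟨by linarith, by linarith⟩)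
  have h1 : volume Ag ≤ volume Af + ENNReal.ofReal (4 * ε) :=
    le_trans (measure_mono hsub1) (le_trans (measure_union_le _ _) (add_le_add le_rfl hBvol))
  have h2 : volume Af ≤ volume Ag + ENNReal.ofReal (4 * ε) :=
    le_trans (measure_mono hsub2) (le_trans (measure_union_le _ _) (add_le_add le_rfl hBvol))
  have hIfin : volume I ≠ ⊤ := by simp [hI, Real.volume_Icc]
  have hAgfin : volume Ag ≠ ⊤ :=
    ne_top_of_le_ne_top hIfin (measure_mono Set.inter_subset_right)
  have hAffin : volume Af ≠ ⊤ :=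
    ne_top_of_le_ne_top hIfin (measure_mono Set.inter_subset_right)
  rw [graphPermuton_rect g hg, graphPermuton_rect f hf]
  have t1 : (volume Ag).toReal ≤ (volume Af).toReal + 4 * ε := by
    have := ENNReal.toReal_mono (by
      exact ENNReal.add_ne_top.mpr ⟨hAffin, ENNReal.ofReal_ne_top⟩) h1
    rwa [ENNReal.toReal_add hAffin ENNReal.ofReal_ne_top,
      ENNReal.toReal_ofReal (by linarith)] at this
  have t2 : (volume Af).toReal ≤ (volume Ag).toReal + 4 * ε := by
    have := ENNReal.toReal_mono (by
      exact ENNReal.add_ne_top.mpr ⟨hAgfin, ENNReal.ofReal_ne_top⟩) h2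
    rwa [ENNReal.toReal_add hAgfin ENNReal.ofReal_ne_top,
      ENNReal.toReal_ofReal (by linarith)] at this
  rw [abs_le]
  constructor <;> [linarith; linarith]


/-- If Lebesgue-measure-preserving maps f_n : [0,1] → [0,1] converge uniformly to f,
then μ_{f_n} → μ_f in the rectangle (cut) metric. -/
theorem graphPermuton_tendsto_of_tendstoUniformly
    (f : ℝ → ℝ) (fs : ℕ → ℝ → ℝ)
    (hf : Measurable f) (hfs : ∀ n, Measurable (fs n))
    (hmaps : Set.MapsTo f (Set.Icc (0:ℝ) 1) (Set.Icc (0:ℝ) 1))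
    (hmapsn : ∀ n, Set.MapsTo (fs n) (Set.Icc (0:ℝ) 1) (Set.Icc (0:ℝ) 1))
    (hmp : Measure.map f (volume.restrict (Set.Icc (0:ℝ) 1)) =
      volume.restrict (Set.Icc (0:ℝ) 1))
    (hmpn : ∀ n, Measure.map (fs n) (volume.restrict (Set.Icc (0:ℝ) 1)) =
      volume.restrict (Set.Icc (0:ℝ) 1))
    (hunif : TendstoUniformlyOn (fun n => fs n) f atTop (Set.Icc (0:ℝ) 1)) :
    Tendsto (fun n => rectDist (graphPermuton (fs n)) (graphPermuton f)) atTop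
      (nhds 0) := by
  rw [NormedAddCommGroup.tendsto_nhds_zero]
  intro ε hε
  have h5 : 0 < ε / 5 := by linarith
  have hu := Metric.tendstoUniformlyOn_iff.mp hunif (ε / 5) h5
  filter_upwards [hu] with n hn
  have hclose : ∀ x ∈ Set.Icc (0:ℝ) 1, |fs n x - f x| ≤ ε / 5 := by
    intro x hx
    have := hn x hx
    rw [Real.dist_eq] at this
    rw [abs_sub_comm]
    linarith [le_of_lt this]
  have hbound := rect_mem_bound f (fs n) hf (hfs n) hmp (ε / 5) h5 hclose
  have hle : rectDist (graphPermuton (fs n)) (graphPermuton f) ≤ 4 * (ε / 5) :=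
    Real.sSup_le hbound (by positivity)
  have hge : 0 ≤ rectDist (graphPermuton (fs n)) (graphPermuton f) :=
    le_csSup ⟨4 * (ε / 5), fun r hr => hbound r hr⟩ (zero_mem_rectSet _ _)
  rw [Real.norm_eq_abs, abs_of_nonneg hge]
  linarith
end

section
/- Let d ≥ 1 and let σ ∈ Sym(2d) be the permutation given in one-line notation by (2d−1, 2d−3, …, 1, 2d, 2d−2, …, 2); that is, σ(i) = 2d+1−2i for 1 ≤ i ≤ d and σ(d+j) = 2d+2−2j for 1 ≤ j ≤ d. Suppose {1, 2, …, 2d} is partitioned into d consecutive (possibly empty) integer intervals I_1, …, I_d such that each image σ(I_k) is a set of consecutive integers (and then the σ(I_k) are pairwise disjoint intervals). Then all but at most one of the intervals I_k are empty. -/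
/-!
Since d blocks cover 2d points, some block contains two consecutive positions i, i+1. The values
of σ on the first half {0, …, d-1} are even, those on the second half odd, and two consecutive
positions in the same half are sent two apart. So if i, i+1 lay in the same half, the value between
σ(i+1) and σ(i) would have to be hit from the other half, and the block would contain d-1 and d
anyway. Their images are the extreme values 0 and 2d-1, so the image of the block, and with it the
block, is everything.
-/

/-- The 0-indexed one-line formula of the permutation (2d-1, 2d-3, …, 1, 2d, 2d-2, …, 2). -/
def evenOddInterleave (d i : ℕ) : ℕ :=
  if i < d then 2 * d - 2 * i - 2 else 4 * d - 2 * i - 1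

section Arithmetic

variable {d i : ℕ}

theorem even_evenOddInterleave_iff (hi : i < 2 * d) : Even (evenOddInterleave d i) ↔ i < d := by
  unfold evenOddInterleave
  split_ifs <;> simp only [Nat.even_iff] <;> omega

theorem evenOddInterleave_succ_add_two (hi : i + 1 < 2 * d) (hid : i + 1 ≠ d) :
    evenOddInterleave d (i + 1) + 2 = evenOddInterleave d i := by
  unfold evenOddInterleave
  split_ifs <;> omega

end Arithmetic

theorem Fin.apply_last_le_of_succ_le_add_one {n : ℕ} (b : Fin (n + 1) → ℕ)
    (h : ∀ k : Fin n, b k.succ ≤ b k.castSucc + 1) : b (Fin.last n) ≤ b 0 + n := by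
  suffices ∀ k : Fin (n + 1), b k ≤ b 0 + k from this (Fin.last n)
  refine Fin.induction (by simp) fun k ih => ?_
  have := h k
  simp only [Fin.val_succ, Fin.val_castSucc] at ih ⊢
  omega

theorem Monotone.castSucc_eq_succ_of_ne {n : ℕ} {b : Fin (n + 1) → ℕ} (hb : Monotone b)
    {k k' : Fin n} (hk' : k' ≠ k) (hk0 : b k.castSucc = b 0) (hkl : b k.succ = b (Fin.last n)) :
    b k'.castSucc = b k'.succ := by
  have hk'0 := hb (Fin.zero_le k'.castSucc)
  have hk'l := hb (Fin.le_last k'.succ)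
  have hk'k' := hb (Fin.castSucc_lt_succ (i := k')).le
  rcases lt_or_gt_of_ne hk' with hlt | hgt
  · have := hb (Fin.succ_le_castSucc_iff.mpr hlt)
    omega
  · have := hb (Fin.succ_le_castSucc_iff.mpr hgt)
    omega

section Blocks

variable {d : ℕ} {σ : Equiv.Perm (Fin (2 * d))} (hσ : ∀ i, (σ i : ℕ) = evenOddInterleave d i)
  {lo hi : ℕ}
include hσ

theorem lt_and_lt_of_ordConnected_image_block
    (hS : (σ '' {i | lo ≤ (i : ℕ) ∧ (i : ℕ) < hi}).OrdConnected)
    (hsize : lo + 2 ≤ hi) (hhi : hi ≤ 2 * d) : lo < d ∧ d < hi := by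
  by_contra hsplit
  have hlo : lo < 2 * d := by omega
  have hlo1 : lo + 1 < 2 * d := by omega
  have hgap : (σ ⟨lo + 1, hlo1⟩ : ℕ) + 2 = σ ⟨lo, hlo⟩ := by
    rw [hσ, hσ]
    exact evenOddInterleave_succ_add_two hlo1 (by omega)
  set v : Fin (2 * d) := ⟨(σ ⟨lo, hlo⟩ : ℕ) - 1, by omega⟩
  have hv : v ∈ Set.Icc (σ ⟨lo + 1, hlo1⟩) (σ ⟨lo, hlo⟩) := by
    simp only [Set.mem_Icc, Fin.le_def, v]
    omega
  obtain ⟨j, ⟨hloj, hjhi⟩, hσj⟩ :=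
    hS.out ⟨_, ⟨Nat.le_succ lo, show lo + 1 < hi by omega⟩, rfl⟩
      ⟨_, ⟨le_rfl, show lo < hi by omega⟩, rfl⟩ hv
  have hjv : (σ j : ℕ) + 1 = σ ⟨lo, hlo⟩ := by
    rw [hσj]
    show (σ ⟨lo, hlo⟩ : ℕ) - 1 + 1 = _
    omega
  have hj : Even (σ j : ℕ) ↔ (j : ℕ) < d := by rw [hσ]; exact even_evenOddInterleave_iff j.isLt
  have hlo' : Even (σ ⟨lo, hlo⟩ : ℕ) ↔ lo < d := by rw [hσ]; exact even_evenOddInterleave_iff hlo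
  rw [← hjv, Nat.even_add_one, hj] at hlo'
  omega

theorem eq_zero_and_le_of_ordConnected_image_block
    (hS : (σ '' {i | lo ≤ (i : ℕ) ∧ (i : ℕ) < hi}).OrdConnected)
    (hlo : lo < d) (hhi : d < hi) : lo = 0 ∧ 2 * d ≤ hi := by
  set iMin : Fin (2 * d) := ⟨d - 1, by omega⟩
  set iMax : Fin (2 * d) := ⟨d, by omega⟩
  have hmin : (σ iMin : ℕ) = 0 := by
    rw [hσ]; simp only [evenOddInterleave, iMin]; split_ifs <;> omega
  have hmax : (σ iMax : ℕ) = 2 * d - 1 := by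
    rw [hσ]; simp only [evenOddInterleave, iMax]; split_ifs <;> omega
  have hall (i : Fin (2 * d)) : lo ≤ (i : ℕ) ∧ (i : ℕ) < hi :=
    σ.injective.mem_set_image.mp <|
      hS.out (Set.mem_image_of_mem σ (x := iMin) (show lo ≤ d - 1 ∧ d - 1 < hi by omega))
        (Set.mem_image_of_mem σ (x := iMax) (show lo ≤ d ∧ d < hi by omega))
        ⟨Fin.le_def.mpr (by omega), Fin.le_def.mpr (by omega)⟩
  have hzero := hall ⟨0, by omega⟩
  have htop := hall ⟨2 * d - 1, by omega⟩
  simp only at hzero htop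
  omega

end Blocks

/-- Let σ ∈ Sym(2d) be (2d-1, 2d-3, …, 1, 2d, 2d-2, …, 2) in one-line notation
(here written 0-indexed: σ(i) = 2d-2-2i for i < d and σ(i) = 4d-1-2i for i ≥ d).
If {0, …, 2d-1} is partitioned into d consecutive (possibly empty) integer intervals
I_1, …, I_d, given by cut points b, such that each image σ(I_k) is an integer interval,
then all but at most one of the intervals are empty. -/
theorem evenOddInterleave_blocks_trivial
    (d : ℕ) (hd : 1 ≤ d) (σ : Equiv.Perm (Fin (2 * d)))
    (hσ : ∀ i : Fin (2 * d),
      (σ i : ℕ) = if (i : ℕ) < d then 2 * d - 2 * (i : ℕ) - 2 else 4 * d - 2 * (i : ℕ) - 1)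
    (b : Fin (d + 1) → ℕ) (hb0 : b 0 = 0) (hbd : b (Fin.last d) = 2 * d)
    (hmono : Monotone b)
    (hconsec : ∀ k : Fin d, ∀ u v w : Fin (2 * d),
      u ∈ ⇑σ '' {i : Fin (2 * d) | b k.castSucc ≤ (i : ℕ) ∧ (i : ℕ) < b k.succ} →
      w ∈ ⇑σ '' {i : Fin (2 * d) | b k.castSucc ≤ (i : ℕ) ∧ (i : ℕ) < b k.succ} →
      u ≤ v → v ≤ w →
      v ∈ ⇑σ '' {i : Fin (2 * d) | b k.castSucc ≤ (i : ℕ) ∧ (i : ℕ) < b k.succ}) :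
    ∃ k₀ : Fin d, ∀ k : Fin d, k ≠ k₀ → b k.castSucc = b k.succ := by
  obtain ⟨k, hk⟩ : ∃ k : Fin d, b k.castSucc + 2 ≤ b k.succ := by
    by_contra! hsmall
    have := Fin.apply_last_le_of_succ_le_add_one b fun k => Nat.le_of_lt_succ (hsmall k)
    omega
  have hS : (σ '' {i | b k.castSucc ≤ (i : ℕ) ∧ (i : ℕ) < b k.succ}).OrdConnected :=
    ⟨fun u hu w hw v hv => hconsec k u v w hu hw hv.1 hv.2⟩
  have hle : b k.succ ≤ 2 * d := hbd ▸ hmono (Fin.le_last _)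
  obtain ⟨hlo, hhi⟩ := lt_and_lt_of_ordConnected_image_block hσ hS hk hle
  obtain ⟨hk0, hkl⟩ := eq_zero_and_le_of_ordConnected_image_block hσ hS hlo hhi
  exact ⟨k, fun k' hk' => hmono.castSucc_eq_succ_of_ne hk' (hk0.trans hb0.symm) (by omega)⟩
end

section
/- Let d ≥ 2 and consider the complex polynomial p(s) = s·(s−1)·⋯·(s−d+2) − d! (that is, p(s) = (s)_{d−1} − d!, where (s)_{d−1} is the falling factorial with d−1 factors). Then p has exactly d−1 pairwise distinct complex roots (p is squarefree), s = d is a root of p, and every root z of p with z ≠ d satisfies Re(z) < d. -/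
open Polynomial Finset
open scoped Nat

/-!
With `n = d - 1` and `Q = descPochhammer ℂ n`, the polynomial is `P = Q - (n + 1)!`.

A repeated root `a` of `P` is a critical point of `Q` with `Q a = (n + 1)!`. There
`∑ j, (a - j)⁻¹ = 0`, and comparing imaginary and real parts shows that `a` is real and lies in
`[0, n - 1]`. But `|Q x| ≤ n!` on `[-1, n]`, by induction on `n` through
`Q_{n+1}(x) = Q_n(x) (x - n) = x Q_n(x - 1)`.

If `Re z ≥ n + 1` and `z ≠ n + 1`, then `|z - j| > n + 1 - j` for every `j < n`, so
`|Q z| > (n + 1)!` and `z` is not a root.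
-/

theorem Nat.add_one_descFactorial_self (n : ℕ) : (n + 1).descFactorial n = (n + 1)! := by
  simpa using (Nat.descFactorial_succ (n + 1) n).symm.trans (Nat.descFactorial_self (n + 1))

theorem abs_descPochhammer_eval_le_factorial (n : ℕ) {x : ℝ} (hx₀ : -1 ≤ x) (hx₁ : x ≤ n) :
    |(descPochhammer ℝ n).eval x| ≤ n ! := by
  induction n generalizing x with
  | zero => simp
  | succ n ih =>
    push_cast at hx₁
    rw [Nat.factorial_succ, Nat.cast_mul, mul_comm]
    rcases le_or_gt x n with hxn | hxn
    · rw [descPochhammer_succ_eval, abs_mul]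
      exact mul_le_mul (ih hx₀ hxn) (abs_le.2 ⟨by push_cast; linarith, by linarith⟩) (abs_nonneg _)
        (by positivity)
    · rw [descPochhammer_succ_left, eval_mul, eval_comp, eval_X, eval_sub, eval_X, eval_one,
        abs_mul, mul_comm]
      exact mul_le_mul (ih (by linarith [n.cast_nonneg (α := ℝ)]) (by linarith))
        (abs_le.2 ⟨by linarith [n.cast_nonneg (α := ℝ)], by push_cast; linarith⟩) (abs_nonneg _)
        (by positivity)

theorem logDeriv_descPochhammer_eval {𝕜 : Type*} [NontriviallyNormedField 𝕜] (n : ℕ) {a : 𝕜}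
    (ha : (descPochhammer 𝕜 n).eval a ≠ 0) :
    logDeriv (descPochhammer 𝕜 n).eval a = ∑ j ∈ range n, (a - j)⁻¹ := by
  rw [descPochhammer_eval_eq_prod_range, prod_ne_zero_iff] at ha
  simp_rw [descPochhammer_eval_eq_prod_range]
  rw [logDeriv_prod ha fun j _ => (differentiableAt_id.sub_const _)]
  simp [logDeriv_apply]

namespace Complex

variable {ι : Type*} {s : Finset ι} {t : ι → ℝ} {a : ℂ}

theorem im_eq_zero_of_sum_inv_sub_eq_zero (hs : s.Nonempty) (h : ∑ i ∈ s, (a - t i)⁻¹ = 0) :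
    a.im = 0 := by
  by_contra ha
  have hpos : 0 < ∑ i ∈ s, (normSq (a - t i))⁻¹ :=
    sum_pos (fun i _ => inv_pos.2 (normSq_pos.2 fun h0 => ha (by simpa using congrArg im h0))) hs
  have him : (∑ i ∈ s, (a - t i)⁻¹).im = -a.im * ∑ i ∈ s, (normSq (a - t i))⁻¹ := by
    simp [im_sum, mul_sum, div_eq_mul_inv]
  rw [h, zero_im] at him
  exact ha (neg_eq_zero.1 ((mul_eq_zero.1 him.symm).resolve_right hpos.ne'))

theorem re_sum_inv_sub_neg (hs : s.Nonempty) (h : ∀ i ∈ s, a.re < t i) :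
    (∑ i ∈ s, (a - t i)⁻¹).re < 0 := by
  rw [re_sum]
  refine sum_neg (fun i hi => ?_) hs
  have hre : (a - t i).re < 0 := by simpa using h i hi
  rw [inv_re]
  exact div_neg_of_neg_of_pos hre (normSq_pos.2 fun h0 => by simp [h0] at hre)

theorem re_mem_Icc_of_sum_inv_sub_eq_zero (hs : s.Nonempty) {lo hi : ℝ}
    (ht : ∀ i ∈ s, t i ∈ Set.Icc lo hi) (h : ∑ i ∈ s, (a - t i)⁻¹ = 0) :
    a.re ∈ Set.Icc lo hi := by
  constructor
  · by_contra! hlo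
    have := re_sum_inv_sub_neg hs fun i hi => hlo.trans_le (ht i hi).1
    simp [h] at this
  · by_contra! hhi
    have := re_sum_inv_sub_neg (a := -a) (t := fun i => -t i) hs
      fun i hi => by simpa using (ht i hi).2.trans_lt hhi
    have hneg : ∑ i ∈ s, (-a - ((-t i : ℝ) : ℂ))⁻¹ = -∑ i ∈ s, (a - t i)⁻¹ := by
      rw [← sum_neg_distrib]
      refine sum_congr rfl fun i _ => ?_
      rw [ofReal_neg, neg_sub_neg, ← inv_neg, neg_sub]
    rw [hneg, h, neg_zero, zero_re] at this
    exact this.false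

theorem sub_lt_norm_sub_of_le_re {z : ℂ} {r : ℝ} (hr : r ≤ z.re) (hz : z ≠ r) (t : ℝ) :
    r - t < ‖z - t‖ := by
  by_cases him : z.im = 0
  · have hz' : z = z.re := ext rfl (by simp [him])
    have hlt : r < z.re := hr.lt_of_ne fun h => hz (by rw [hz', h])
    rw [hz', ← ofReal_sub, norm_real, Real.norm_eq_abs]
    exact (sub_lt_sub_right hlt t).trans_le (le_abs_self _)
  · calc r - t ≤ |(z - t).re| := by simpa using (sub_le_sub_right hr t).trans (le_abs_self _)
      _ < ‖z - t‖ := abs_re_lt_norm.2 (by simpa using him)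

end Complex

theorem norm_descPochhammer_eval_le_factorial_of_isRoot_derivative (n : ℕ) {a : ℂ}
    (ha : (derivative (descPochhammer ℂ n)).IsRoot a) :
    ‖(descPochhammer ℂ n).eval a‖ ≤ n ! := by
  rcases eq_or_ne n 0 with rfl | hn
  · simp
  by_cases h0 : (descPochhammer ℂ n).eval a = 0
  · simp [h0]
  have hsum : ∑ j ∈ range n, (a - ((j : ℝ) : ℂ))⁻¹ = 0 := by
    have := logDeriv_descPochhammer_eval n h0
    rw [logDeriv_apply, Polynomial.deriv, ha.eq_zero, zero_div] at this
    simpa using this.symm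
  have hs : (range n).Nonempty := nonempty_range_iff.2 hn
  have hreal : a = a.re :=
    Complex.ext rfl (by simp [Complex.im_eq_zero_of_sum_inv_sub_eq_zero hs hsum])
  have hre := Complex.re_mem_Icc_of_sum_inv_sub_eq_zero hs (lo := -1) (hi := n)
    (fun j hj => ⟨by linarith [j.cast_nonneg (α := ℝ)], by exact_mod_cast (mem_range.1 hj).le⟩) hsum
  have hcast : (descPochhammer ℂ n).eval (a.re : ℂ) = ((descPochhammer ℝ n).eval a.re : ℝ) := by
    simp [descPochhammer_eval_eq_prod_range]
  rw [hreal, hcast, Complex.norm_real, Real.norm_eq_abs]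
  exact abs_descPochhammer_eval_le_factorial n hre.1 hre.2

theorem nodup_roots_descPochhammer_sub_C (n : ℕ) {c : ℂ} (hc : (n ! : ℝ) < ‖c‖) :
    (descPochhammer ℂ n - C c).roots.Nodup := by
  set P := descPochhammer ℂ n - C c
  by_cases hP : P = 0
  · simp [hP]
  refine Multiset.nodup_iff_count_le_one.2 fun a => ?_
  rw [count_roots]
  by_contra! h
  obtain ⟨hroot, hcrit⟩ := (one_lt_rootMultiplicity_iff_isRoot hP).1 h
  have hval : (descPochhammer ℂ n).eval a = c := by simpa [P, sub_eq_zero] using hroot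
  have hcrit' : (derivative (descPochhammer ℂ n)).IsRoot a := by simpa [P] using hcrit
  have := norm_descPochhammer_eval_le_factorial_of_isRoot_derivative n hcrit'
  rw [hval] at this
  linarith

theorem descFactorial_lt_norm_descPochhammer_eval {m n : ℕ} (hn : n ≠ 0) (hnm : n ≤ m) {z : ℂ}
    (hre : (m : ℝ) ≤ z.re) (hz : z ≠ m) :
    (m.descFactorial n : ℝ) < ‖(descPochhammer ℂ n).eval z‖ := by
  rw [← descPochhammer_eval_eq_descFactorial ℝ, descPochhammer_eval_eq_prod_range,
    descPochhammer_eval_eq_prod_range, norm_prod]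
  refine prod_lt_prod_of_nonempty (fun j hj => ?_) (fun j _ => ?_) (nonempty_range_iff.2 hn)
  · have : (j : ℝ) < m := by exact_mod_cast (mem_range.1 hj).trans_le hnm
    linarith
  · simpa using Complex.sub_lt_norm_sub_of_le_re hre (by simpa using hz) j

/-- The polynomial p(s) = (s)_{d-1} - d! (falling factorial minus d factorial) has
exactly d-1 pairwise distinct complex roots, s = d is one of them, and every other root
has real part strictly less than d. -/
theorem fallingFactorial_sub_factorial_roots
    (d : ℕ) (hd : 2 ≤ d) :
    (∏ i ∈ Finset.range (d - 1), ((d : ℂ) - (i : ℂ))) - (d.factorial : ℂ) = 0 ∧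
    (∃ S : Finset ℂ, S.card = d - 1 ∧
      ∀ z : ℂ, ((∏ i ∈ Finset.range (d - 1), (z - (i : ℂ))) - (d.factorial : ℂ) = 0 ↔ z ∈ S)) ∧
    ∀ z : ℂ, (∏ i ∈ Finset.range (d - 1), (z - (i : ℂ))) - (d.factorial : ℂ) = 0 →
      z ≠ (d : ℂ) → z.re < d := by
  obtain ⟨n, rfl⟩ : ∃ n, d = n + 1 := ⟨d - 1, by omega⟩
  have hn : n ≠ 0 := by omega
  simp only [Nat.add_sub_cancel, ← descPochhammer_eval_eq_prod_range, sub_eq_zero]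
  set P := descPochhammer ℂ n - C ((n + 1)! : ℂ)
  have hP : P ≠ 0 :=
    ne_zero_of_natDegree_gt (n := 0) (by rw [natDegree_sub_C, descPochhammer_natDegree]; omega)
  have hfac : (n ! : ℝ) < ‖((n + 1)! : ℂ)‖ := by
    rw [Complex.norm_natCast]
    exact_mod_cast (Nat.factorial_lt (Nat.pos_of_ne_zero hn)).2 n.lt_succ_self
  refine ⟨?_, ⟨P.roots.toFinset, ?_, fun z => ?_⟩, fun z hz hne => ?_⟩
  · exact_mod_cast (descPochhammer_eval_eq_descFactorial ℂ (n + 1) n).trans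
      (congrArg _ (Nat.add_one_descFactorial_self n))
  · rw [Multiset.toFinset_card_of_nodup (nodup_roots_descPochhammer_sub_C n hfac),
      IsAlgClosed.card_roots_eq_natDegree, natDegree_sub_C, descPochhammer_natDegree]
  · rw [Multiset.mem_toFinset, mem_roots hP, IsRoot.def, eval_sub, eval_C, sub_eq_zero]
  · by_contra! hre
    have := descFactorial_lt_norm_descPochhammer_eval hn n.le_succ hre hne
    rw [hz, Nat.add_one_descFactorial_self, Complex.norm_natCast] at this
    exact this.false
end

section
/- Let ρ : ℕ → ℝ satisfy ρ(n) ≥ 0 for all n and ρ(n) ≤ C·log n for all n ≥ 2, for some constant C. Define y : ℕ → ℝ by y(0) = y(1) = 0 and, for n ≥ 2, y(n) = ρ(n) + (2/(n−1))·∑_{k=0}^{n−1} y(k). Then the sequence y(n)/n converges to a finite limit as n → ∞. -/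
/-!
With `S n = ∑_{k<n} y k`, the recurrence says `S (n+1) = (n+1)/(n-1) · S n + ρ n`, so the
normalized sums `a n = S n / ((n-1) n)` (`normalizedPartialSum`) telescope:
`a (n+1) = a n + ρ n / (n (n+1))`. Since `ρ n = O(log n)`, the increments are summable and
`a n` converges; then `y n / n = ρ n / n + 2 a n` converges as well, because `ρ n / n → 0`.
-/

open Filter Topology Finset Real

theorem summable_log_div_natCast_sq : Summable fun n : ℕ => log n / (n : ℝ) ^ 2 := by
  refine ((summable_nat_rpow_inv.2 (by norm_num : (1 : ℝ) < 3 / 2)).mul_left 2).of_nonneg_of_le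
    (fun n => div_nonneg (log_natCast_nonneg n) (sq_nonneg _)) fun n => ?_
  rcases n.eq_zero_or_pos with rfl | hn
  · simp
  have hn' : (0 : ℝ) < n := Nat.cast_pos.2 hn
  have hsplit : (n : ℝ) ^ 2 = (n : ℝ) ^ (3 / 2 : ℝ) * (n : ℝ) ^ (1 / 2 : ℝ) := by
    rw [← rpow_add hn', ← rpow_natCast]; norm_num
  calc log n / (n : ℝ) ^ 2 ≤ (n : ℝ) ^ (1 / 2 : ℝ) / (1 / 2) / (n : ℝ) ^ 2 := by
        gcongr; exact log_natCast_le_rpow_div n (by norm_num)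
    _ = 2 * ((n : ℝ) ^ (3 / 2 : ℝ))⁻¹ := by
        rw [hsplit]; field_simp

theorem tendsto_of_summable_sub {E : Type*} [AddCommGroup E] [TopologicalSpace E]
    [IsTopologicalAddGroup E] {u : ℕ → E} (h : Summable fun n => u (n + 1) - u n) :
    Tendsto u atTop (𝓝 (u 0 + ∑' n, (u (n + 1) - u n))) := by
  have := (tendsto_const_nhds (x := u 0)).add h.hasSum.tendsto_sum_nat
  simpa only [sum_range_sub, add_sub_cancel] using this

section LogBounded

variable {ρ : ℕ → ℝ} {C : ℝ}

theorem summable_div_mul_succ_of_le_mul_log (hρ0 : ∀ n, 0 ≤ ρ n)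
    (hρC : ∀ n ≥ 2, ρ n ≤ C * log n) : Summable fun n : ℕ => ρ n / (n * (n + 1)) := by
  refine (summable_log_div_natCast_sq.mul_left C).of_norm_bounded_eventually_nat ?_
  filter_upwards [eventually_ge_atTop 2] with n hn
  have hn' : (0 : ℝ) < n := by positivity
  rw [Real.norm_of_nonneg (div_nonneg (hρ0 n) (by positivity)), ← mul_div_assoc]
  calc ρ n / (n * (n + 1)) ≤ ρ n / (n : ℝ) ^ 2 := by
        gcongr
        · exact hρ0 n
        · nlinarith
    _ ≤ C * log n / (n : ℝ) ^ 2 := by gcongr; exact hρC n hn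

theorem tendsto_div_natCast_of_le_mul_log (hρ0 : ∀ n, 0 ≤ ρ n)
    (hρC : ∀ n ≥ 2, ρ n ≤ C * log n) : Tendsto (fun n : ℕ => ρ n / n) atTop (𝓝 0) := by
  have hlog : Tendsto (fun n : ℕ => C * (log n / n)) atTop (𝓝 0) := by
    simpa using ((tendsto_pow_log_div_mul_add_atTop 1 0 1 one_ne_zero).comp
      tendsto_natCast_atTop_atTop).const_mul C
  refine squeeze_zero' (.of_forall fun n => div_nonneg (hρ0 n) n.cast_nonneg) ?_ hlog
  filter_upwards [eventually_ge_atTop 2] with n hn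
  rw [← mul_div_assoc]
  gcongr
  exact hρC n hn

end LogBounded

noncomputable def normalizedPartialSum (y : ℕ → ℝ) (n : ℕ) : ℝ :=
  (∑ k ∈ range n, y k) / (((n : ℝ) - 1) * n)

theorem normalizedPartialSum_succ {ρ y : ℕ → ℝ}
    (hrec : ∀ n ≥ 2, y n = ρ n + (2 / ((n : ℝ) - 1)) * ∑ k ∈ range n, y k)
    {n : ℕ} (hn : 2 ≤ n) :
    normalizedPartialSum y (n + 1) = normalizedPartialSum y n + ρ n / (n * (n + 1)) := by
  have hn' : (2 : ℝ) ≤ n := by exact_mod_cast hn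
  have h1 : (n : ℝ) - 1 ≠ 0 := by linarith
  have h2 : (n : ℝ) ≠ 0 := by linarith
  unfold normalizedPartialSum
  rw [sum_range_succ, hrec n hn]
  push_cast
  rw [add_sub_cancel_right]
  field_simp
  ring

theorem div_natCast_eq_add_normalizedPartialSum {ρ y : ℕ → ℝ}
    (hrec : ∀ n ≥ 2, y n = ρ n + (2 / ((n : ℝ) - 1)) * ∑ k ∈ range n, y k)
    {n : ℕ} (hn : 2 ≤ n) :
    y n / n = ρ n / n + 2 * normalizedPartialSum y n := by
  have hn' : (2 : ℝ) ≤ n := by exact_mod_cast hn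
  have h1 : (n : ℝ) - 1 ≠ 0 := by linarith
  rw [normalizedPartialSum, hrec n hn]
  field_simp

theorem selfAveraging_d2_div_converges_general
    (ρ : ℕ → ℝ) (C : ℝ) (hρ0 : ∀ n, 0 ≤ ρ n) (hρC : ∀ n ≥ 2, ρ n ≤ C * Real.log n)
    (y : ℕ → ℝ)
    (hrec : ∀ n ≥ 2, y n = ρ n + (2 / ((n : ℝ) - 1)) * ∑ k ∈ Finset.range n, y k) :
    ∃ c : ℝ, Tendsto (fun n : ℕ => y n / n) atTop (nhds c) := by
  have hincr : Summable fun m =>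
      normalizedPartialSum y (m + 2 + 1) - normalizedPartialSum y (m + 2) := by
    simp_rw [normalizedPartialSum_succ hrec (Nat.le_add_left 2 _), add_sub_cancel_left]
    exact (summable_nat_add_iff 2).2 (summable_div_mul_succ_of_le_mul_log hρ0 hρC)
  have hlim := (tendsto_add_atTop_iff_nat 2).1 (tendsto_of_summable_sub hincr)
  refine ⟨_, ((tendsto_div_natCast_of_le_mul_log hρ0 hρC).add (hlim.const_mul 2)).congr' ?_⟩
  filter_upwards [eventually_ge_atTop 2] with n hn
  exact (div_natCast_eq_add_normalizedPartialSum hrec hn).symm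

/-- If 0 ≤ ρ(n) ≤ C log n and y(0) = y(1) = 0 with
y(n) = ρ(n) + (2/(n-1))·∑_{k<n} y(k) for n ≥ 2, then y(n)/n converges. -/
theorem selfAveraging_d2_div_converges
    (ρ : ℕ → ℝ) (C : ℝ) (hρ0 : ∀ n, 0 ≤ ρ n) (hρC : ∀ n ≥ 2, ρ n ≤ C * Real.log n)
    (y : ℕ → ℝ) (hy0 : y 0 = 0) (hy1 : y 1 = 0)
    (hrec : ∀ n ≥ 2, y n = ρ n + (2 / ((n : ℝ) - 1)) * ∑ k ∈ Finset.range n, y k) :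
    ∃ c : ℝ, Tendsto (fun n : ℕ => y n / n) atTop (nhds c) :=
  selfAveraging_d2_div_converges_general ρ C hρ0 hρC y hrec
end
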